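/- Let B = [B₁, …, B_N] be a matrix of N blocks, each B_n ∈ ℂ^{m×d}, with sub-coherence ν and block-coherence μ_B. Then for any set of K block indices S and the corresponding submatrix B_S ∈ ℂ^{m×Kd}, every eigenvalue λ of B_Sᴴ B_S satisfies |λ − 1| ≤ (d−1)ν + (K−1)d·μ_B, where each column of B has unit ℓ₂ norm. -/

import Mathlib

/-! If `v` is a unit eigenvector of `G = B_Sᴴ B_S` for `λ`, the unit diagonal of `G` gives
`λ - 1 = vᴴ (G - I) v`. Split this quadratic form along the blocks `x_1, …, x_K` of `v`.
A diagonal block contributes at most `ν ∑_{i ≠ j} |x_{n,i}| |x_{n,j}|`, an off-diagonal one at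
most `‖B_nᴴ B_{n'}‖ ‖x_n‖ ‖x_{n'}‖ ≤ d μ_B ‖x_n‖ ‖x_{n'}‖`. Both sums over pairs `i ≠ j` of
products `a_i a_j` are at most `(p - 1) ∑ a_i²` by Cauchy–Schwarz, `(∑ a_i)² ≤ p ∑ a_i²`. -/

open Matrix Finset

/-- Spectral norm (largest singular value) of a complex matrix. -/
noncomputable def specNorm {α β : Type*} [Fintype α] [Fintype β] [DecidableEq β]
    (A : Matrix α β ℂ) : ℝ :=
  ‖(Matrix.toEuclideanLin A).toContinuousLinearMap‖

/-- Euclidean norm of a complex vector. -/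
noncomputable def vnorm {α : Type*} [Fintype α] (v : α → ℂ) : ℝ :=
  Real.sqrt (∑ i, Complex.normSq (v i))

/-- The `n`-th block (of `d` consecutive columns) of a block matrix. -/
def blk {m N d : ℕ} (B : Matrix (Fin m) (Fin N × Fin d) ℂ) (n : Fin N) :
    Matrix (Fin m) (Fin d) ℂ := Matrix.of fun r c => B r (n, c)

/-- Submatrix obtained by concatenating the blocks indexed by `S`. -/
def subMat {m N d K : ℕ} (B : Matrix (Fin m) (Fin N × Fin d) ℂ) (S : Fin K → Fin N) :
    Matrix (Fin m) (Fin K × Fin d) ℂ := Matrix.of fun r c => B r (S c.1, c.2)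

section OffDiagonal

variable {ι : Type*} [Fintype ι] [DecidableEq ι]

theorem sum_sum_eq_sum_add_sum_sum_erase {M : Type*} [AddCommMonoid M] (f : ι → ι → M) :
    ∑ i, ∑ j, f i j = ∑ i, f i i + ∑ i, ∑ j ∈ univ.erase i, f i j := by
  rw [← sum_add_distrib]
  exact sum_congr rfl fun i _ => (add_sum_erase _ _ (mem_univ i)).symm

theorem sum_sum_erase_mul_le (a : ι → ℝ) :
    ∑ i, ∑ j ∈ univ.erase i, a i * a j ≤ (Fintype.card ι - 1) * ∑ i, a i ^ 2 := by
  have hsplit := sum_sum_eq_sum_add_sum_sum_erase fun i j => a i * a j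
  simp only [← sum_mul_sum, ← sq] at hsplit
  have hcs := sq_sum_le_card_mul_sum_sq (s := univ) (f := a)
  rw [card_univ] at hcs
  linarith

theorem norm_sum_sum_erase_le {E : Type*} [SeminormedAddCommGroup E] {f : ι → ι → E}
    {a : ι → ℝ} {c : ℝ} (hf : ∀ i j, i ≠ j → ‖f i j‖ ≤ c * (a i * a j))
    (hc : ∀ i j : ι, i ≠ j → 0 ≤ c) :
    ‖∑ i, ∑ j ∈ univ.erase i, f i j‖ ≤ (Fintype.card ι - 1) * c * ∑ i, a i ^ 2 := by
  calc ‖∑ i, ∑ j ∈ univ.erase i, f i j‖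
      ≤ ∑ i, ∑ j ∈ univ.erase i, c * (a i * a j) := by
        refine (norm_sum_le _ _).trans (sum_le_sum fun i _ => ?_)
        exact (norm_sum_le _ _).trans (sum_le_sum fun j hj => hf i j (ne_of_mem_erase hj).symm)
    _ = c * ∑ i, ∑ j ∈ univ.erase i, a i * a j := by simp only [mul_sum]
    _ ≤ (Fintype.card ι - 1) * c * ∑ i, a i ^ 2 := by
        rcases subsingleton_or_nontrivial ι with hι | ⟨i, j, hij⟩
        · rcases isEmpty_or_nonempty ι with _ | ⟨⟨i⟩⟩
          · simp
          · have : Unique ι := uniqueOfSubsingleton i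
            simp
        · rw [mul_comm _ c, mul_assoc]
          exact mul_le_mul_of_nonneg_left (sum_sum_erase_mul_le a) (hc i j hij)

end OffDiagonal

theorem vnorm_sq {α : Type*} [Fintype α] (x : α → ℂ) : vnorm x ^ 2 = ∑ i, ‖x i‖ ^ 2 := by
  rw [vnorm, Real.sq_sqrt (sum_nonneg fun i _ => Complex.normSq_nonneg _)]
  simp only [Complex.normSq_eq_norm_sq]

theorem norm_toLp_eq_vnorm {α : Type*} [Fintype α] (x : α → ℂ) :
    ‖WithLp.toLp 2 x‖ = vnorm x := by
  rw [EuclideanSpace.norm_eq, ← vnorm_sq]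
  exact Real.sqrt_sq (Real.sqrt_nonneg _)

theorem norm_star_dotProduct_mulVec_le {α β : Type*} [Fintype α] [Fintype β] [DecidableEq β]
    (M : Matrix α β ℂ) (x : α → ℂ) (y : β → ℂ) :
    ‖star x ⬝ᵥ (M *ᵥ y)‖ ≤ specNorm M * (vnorm x * vnorm y) := by
  have hinner : star x ⬝ᵥ (M *ᵥ y) =
      inner ℂ (WithLp.toLp 2 x) ((Matrix.toEuclideanLin M).toContinuousLinearMap
        (WithLp.toLp 2 y)) := by
    rw [EuclideanSpace.inner_eq_star_dotProduct, dotProduct_comm]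
    rfl
  rw [hinner, ← norm_toLp_eq_vnorm, ← norm_toLp_eq_vnorm]
  refine (norm_inner_le_norm _ _).trans ?_
  calc _ ≤ ‖WithLp.toLp 2 x‖ * (specNorm M * ‖WithLp.toLp 2 y‖) :=
        mul_le_mul_of_nonneg_left (ContinuousLinearMap.le_opNorm _ _) (norm_nonneg _)
    _ = _ := by ring

theorem norm_star_dotProduct_mulVec_le_of_diag_eq_zero {ι : Type*} [Fintype ι] [DecidableEq ι]
    {E : Matrix ι ι ℂ} {c : ℝ} (hdiag : ∀ i, E i i = 0)
    (hoff : ∀ i j, i ≠ j → ‖E i j‖ ≤ c) (x : ι → ℂ) :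
    ‖star x ⬝ᵥ (E *ᵥ x)‖ ≤ (Fintype.card ι - 1) * c * vnorm x ^ 2 := by
  have hexpand : star x ⬝ᵥ (E *ᵥ x) = ∑ i, ∑ j ∈ univ.erase i, star (x i) * (E i j * x j) := by
    simp only [dotProduct, mulVec, mul_sum, Pi.star_apply]
    rw [sum_sum_eq_sum_add_sum_sum_erase]
    simp [hdiag]
  rw [hexpand, vnorm_sq]
  refine norm_sum_sum_erase_le (fun i j hij => ?_)
    fun i j hij => (norm_nonneg _).trans (hoff i j hij)
  rw [norm_mul, norm_mul, norm_star]
  calc ‖x i‖ * (‖E i j‖ * ‖x j‖) = ‖E i j‖ * (‖x i‖ * ‖x j‖) := by ring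
    _ ≤ c * (‖x i‖ * ‖x j‖) := mul_le_mul_of_nonneg_right (hoff i j hij) (by positivity)

theorem dotProduct_mulVec_eq_sum_blocks {κ δ R : Type*} [Fintype κ] [Fintype δ]
    [NonUnitalNonAssocSemiring R] (M : Matrix (κ × δ) (κ × δ) R) (u y : κ × δ → R) :
    u ⬝ᵥ (M *ᵥ y) = ∑ n, ∑ n', (fun i => u (n, i)) ⬝ᵥ
      (M.submatrix (Prod.mk n) (Prod.mk n') *ᵥ fun j => y (n', j)) := by
  simp only [dotProduct, mulVec, submatrix_apply, mul_sum, Fintype.sum_prod_type]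
  exact sum_congr rfl fun n _ => sum_comm

theorem norm_star_dotProduct_mulVec_le_of_blocks {κ δ : Type*} [Fintype κ] [Fintype δ]
    [DecidableEq κ] [DecidableEq δ] {M : Matrix (κ × δ) (κ × δ) ℂ} {ν β : ℝ}
    (hdiag : ∀ p, M p p = 0) (hν : ∀ n i j, i ≠ j → ‖M (n, i) (n, j)‖ ≤ ν)
    (hβ : ∀ n n', n ≠ n' → specNorm (M.submatrix (Prod.mk n) (Prod.mk n')) ≤ β)
    (v : κ × δ → ℂ) :
    ‖star v ⬝ᵥ (M *ᵥ v)‖ ≤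
      ((Fintype.card δ - 1) * ν + (Fintype.card κ - 1) * β) * vnorm v ^ 2 := by
  set x : κ → δ → ℂ := fun n i => v (n, i)
  have hv : vnorm v ^ 2 = ∑ n, vnorm (x n) ^ 2 := by
    simp only [vnorm_sq, Fintype.sum_prod_type, x]
  have hdiagBlocks : ‖∑ n, star (x n) ⬝ᵥ (M.submatrix (Prod.mk n) (Prod.mk n) *ᵥ x n)‖ ≤
      (Fintype.card δ - 1) * ν * vnorm v ^ 2 := by
    rw [hv, mul_sum]
    exact (norm_sum_le _ _).trans <| sum_le_sum fun n _ =>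
      norm_star_dotProduct_mulVec_le_of_diag_eq_zero
        (E := M.submatrix (Prod.mk n) (Prod.mk n)) (fun i => hdiag _) (hν n) _
  have hoffBlocks : ‖∑ n, ∑ n' ∈ univ.erase n,
      star (x n) ⬝ᵥ (M.submatrix (Prod.mk n) (Prod.mk n') *ᵥ x n')‖ ≤
      (Fintype.card κ - 1) * β * vnorm v ^ 2 := by
    rw [hv]
    refine norm_sum_sum_erase_le (fun n n' hne => ?_)
      fun n n' hne => (norm_nonneg _).trans (hβ n n' hne)
    exact (norm_star_dotProduct_mulVec_le _ _ _).trans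
      (mul_le_mul_of_nonneg_right (hβ n n' hne) (by unfold vnorm; positivity))
  rw [dotProduct_mulVec_eq_sum_blocks, sum_sum_eq_sum_add_sum_sum_erase]
  calc _ ≤ _ := norm_add_le _ _
    _ ≤ _ := add_le_add hdiagBlocks hoffBlocks
    _ = _ := by ring

theorem Matrix.IsHermitian.abs_eigenvalues_sub_one_le {ι : Type*} [Fintype ι] [DecidableEq ι]
    {A : Matrix ι ι ℂ} (hA : A.IsHermitian) {c : ℝ}
    (hc : ∀ v, ‖star v ⬝ᵥ ((A - 1) *ᵥ v)‖ ≤ c * vnorm v ^ 2) (k : ι) :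
    |hA.eigenvalues k - 1| ≤ c := by
  have heig := hA.eigenvalues_eq k
  set v := hA.eigenvectorBasis k
  have hunit : ‖v‖ = 1 := hA.eigenvectorBasis.orthonormal.1 k
  have hvv : star ⇑v ⬝ᵥ ⇑v = 1 := by
    rw [dotProduct_comm, ← EuclideanSpace.inner_eq_star_dotProduct, inner_self_eq_norm_sq_to_K,
      hunit]
    simp
  have hre : hA.eigenvalues k - 1 = (star ⇑v ⬝ᵥ ((A - 1) *ᵥ v)).re := by
    rw [sub_mulVec, one_mulVec, dotProduct_sub, hvv, heig]
    simp
  rw [hre]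
  calc _ ≤ _ := Complex.abs_re_le_norm _
    _ ≤ c * vnorm v ^ 2 := hc v
    _ = c := by rw [← norm_toLp_eq_vnorm, WithLp.toLp_ofLp, hunit, one_pow, mul_one]

theorem Matrix.IsHermitian.abs_eigenvalues_sub_one_le_of_blocks {κ δ : Type*} [Fintype κ]
    [Fintype δ] [DecidableEq κ] [DecidableEq δ] {A : Matrix (κ × δ) (κ × δ) ℂ}
    (hA : A.IsHermitian) {ν β : ℝ} (hdiag : ∀ p, A p p = 1)
    (hν : ∀ n i j, i ≠ j → ‖A (n, i) (n, j)‖ ≤ ν)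
    (hβ : ∀ n n', n ≠ n' → specNorm (A.submatrix (Prod.mk n) (Prod.mk n')) ≤ β) (k : κ × δ) :
    |hA.eigenvalues k - 1| ≤ (Fintype.card δ - 1) * ν + (Fintype.card κ - 1) * β := by
  refine hA.abs_eigenvalues_sub_one_le (fun v => ?_) k
  refine norm_star_dotProduct_mulVec_le_of_blocks (fun p => by simp [hdiag])
    (fun n i j hij => ?_) (fun n n' hne => ?_) v
  · simpa [one_apply_ne, hij] using hν n i j hij
  · convert hβ n n' hne using 2
    ext i j
    simp [hne]

theorem Matrix.conjTranspose_mul_self_apply_self {α β : Type*} [Fintype α] (A : Matrix α β ℂ)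
    (j : β) :
    (Aᴴ * A) j j = ∑ r, Complex.normSq (A r j) := by
  simp [mul_apply, Complex.normSq_eq_conj_mul_self]

theorem gram_subMat_submatrix {m N d K : ℕ} (B : Matrix (Fin m) (Fin N × Fin d) ℂ)
    (S : Fin K → Fin N) (n n' : Fin K) :
    ((subMat B S)ᴴ * subMat B S).submatrix (Prod.mk n) (Prod.mk n') =
      (blk B (S n))ᴴ * blk B (S n') := by
  ext i j
  simp [mul_apply, subMat, blk]

/-- Gershgorin-type bound — every eigenvalue `λ` of the Gram
matrix `B_Sᴴ B_S` of a `K`-block submatrix of a unit-column-norm block matrix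
with sub-coherence `ν` and block-coherence `μB` satisfies
`|λ − 1| ≤ (d−1)ν + (K−1)d·μB`. -/
theorem gram_eigenvalue_bound
    (m N d K : ℕ) (B : Matrix (Fin m) (Fin N × Fin d) ℂ) (ν μB : ℝ)
    (hcol : ∀ j, ∑ r, Complex.normSq (B r j) = 1)
    (hν : ∀ n : Fin N, ∀ i j : Fin d, i ≠ j → ‖((blk B n)ᴴ * blk B n) i j‖ ≤ ν)
    (hμ : ∀ n n' : Fin N, n ≠ n' → specNorm ((blk B n)ᴴ * blk B n') ≤ d * μB)
    (S : Fin K → Fin N) (hS : Function.Injective S)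
    (hG : ((subMat B S)ᴴ * subMat B S).IsHermitian) :
    ∀ k, |hG.eigenvalues k - 1| ≤ ((d : ℝ) - 1) * ν + ((K : ℝ) - 1) * d * μB := by
  intro k
  have hdiag : ∀ p, ((subMat B S)ᴴ * subMat B S) p p = 1 := fun p => by
    rw [conjTranspose_mul_self_apply_self]
    exact_mod_cast hcol _
  have hbound := hG.abs_eigenvalues_sub_one_le_of_blocks hdiag
    (fun n i j hij => by simpa [← gram_subMat_submatrix] using hν (S n) i j hij)
    (fun n n' hne => by simpa [gram_subMat_submatrix] using hμ _ _ (hS.ne hne)) k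
  simpa [mul_assoc] using hbound
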